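/- arXiv:math/0607625 — 2 statements merged into one kernel-verified Lean document; each statement's English description precedes it below -/
import Mathlib

section
/- (Scalar case p = 1 of Theorem 2.4, k = 2.) Let (X₁, X₂) have joint density on (0,∞)² proportional to x₁^{α₁−1} x₂^{α₂−1} (1+x₂)^{β₁} (1+x₁+x₂)^{−(α₁+α₂+α₃+β₁+β₂)}. Then U₁ = (1+X₂)/X₁ and U₂ = 1/X₂ are independent type-2 beta random variables, with U₁ having density proportional to u^{a₁−1}(1+u)^{−(a₁+α₁)} for a₁ = α₂+α₃+β₁+β₂, and U₂ having density proportional to u^{a₂−1}(1+u)^{−(a₂+α₂)} for a₂ = α₃+β₂. -/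
open MeasureTheory Real Set

/-- The type-2 beta (beta prime) distribution with parameters (a,b) on (0,∞). -/
noncomputable def betaPrimeMeasure (a b : ℝ) : Measure ℝ :=
  volume.withDensity fun u => ENNReal.ofReal
    ((Ioi (0 : ℝ)).indicator
      (fun u => u ^ (a - 1) * (1 + u) ^ (-(a + b)) / (Gamma a * Gamma b / Gamma (a + b))) u)

/-!
The map `x ↦ ((1 + x₂)/x₁, 1/x₂)` is a diffeomorphism of the open quadrant onto itself with
Jacobian determinant `(1 + x₂)/(x₁² x₂²)`. By the change-of-variables formula, the image of the
type-2 Dirichlet density is `c B(a₁, α₁) B(a₂, α₂)` times the product of the beta prime densities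
with parameters `(a₁, α₁)` and `(a₂, α₂)`. Both measures are probability measures, so that
constant is `1`. That beta prime densities integrate to `1` follows from the same change of
variables: the beta prime law is the image of the beta law under `x ↦ x/(1 - x)`.
-/

open scoped ENNReal
open ProbabilityTheory

theorem MeasureTheory.Measure.map_withDensity_indicator_of_bijOn {E : Type*}
    [NormedAddCommGroup E] [NormedSpace ℝ E] [FiniteDimensional ℝ E] [MeasurableSpace E]
    [BorelSpace E] {μ : Measure E} [μ.IsAddHaarMeasure] {s t : Set E} {T : E → E}
    {T' : E → E →L[ℝ] E} {f g : E → ℝ≥0∞} (hs : MeasurableSet s) (hT : Measurable T)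
    (hT' : ∀ x ∈ s, HasFDerivWithinAt T (T' x) s x) (hbij : BijOn T s t)
    (hfg : ∀ x ∈ s, ENNReal.ofReal |(T' x).det| * g (T x) = f x) :
    (μ.withDensity (s.indicator f)).map T = μ.withDensity (t.indicator g) := by
  ext A hA
  rw [← hbij.image_eq, map_apply hT hA, withDensity_apply _ (hT hA), withDensity_apply _ hA,
    setLIntegral_indicator hs,
    setLIntegral_indicator (measurable_image_of_fderivWithin hs hT' hbij.injOn),
    ← image_inter_preimage, lintegral_image_eq_lintegral_abs_det_fderiv_mul μ (hs.inter (hT hA))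
      (fun x hx => (hT' x hx.1).mono inter_subset_left) (hbij.injOn.mono inter_subset_left)]
  exact setLIntegral_congr_fun (hs.inter (hT hA)) fun x hx => (hfg x hx.1).symm

theorem MeasureTheory.withDensity_ofReal_indicator {α : Type*} [MeasurableSpace α] (μ : Measure α)
    (s : Set α) (f : α → ℝ) :
    (μ.withDensity fun x => ENNReal.ofReal (s.indicator f x)) =
      μ.withDensity (s.indicator fun x => ENNReal.ofReal (f x)) := by
  congr 1
  ext x
  exact (congrFun (indicator_comp_of_zero ENNReal.ofReal_zero) x).symm

theorem MeasureTheory.Measure.prod_withDensity_indicator {α β : Type*} [MeasurableSpace α]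
    [MeasurableSpace β] {μ : Measure α} {ν : Measure β} [SFinite μ] [SFinite ν] {s : Set α}
    {t : Set β} {f : α → ℝ≥0∞} {g : β → ℝ≥0∞} (hs : MeasurableSet s) (ht : MeasurableSet t)
    (hf : Measurable f) (hg : Measurable g) :
    (μ.withDensity (s.indicator f)).prod (ν.withDensity (t.indicator g)) =
      (μ.prod ν).withDensity ((s ×ˢ t).indicator fun z => f z.1 * g z.2) := by
  rw [prod_withDensity (hf.indicator hs) (hg.indicator ht)]
  congr 1
  ext z
  by_cases h₁ : z.1 ∈ s <;> by_cases h₂ : z.2 ∈ t <;> simp [h₁, h₂]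

theorem MeasureTheory.Measure.eq_of_eq_smul {α : Type*} [MeasurableSpace α] {μ ν : Measure α}
    [IsProbabilityMeasure μ] [IsProbabilityMeasure ν] {r : ℝ≥0∞} (h : μ = r • ν) : μ = ν := by
  have hr : r = 1 := by simpa using (congrArg (· univ) h).symm
  rw [h, hr, one_smul]

theorem ProbabilityTheory.betaPDF_eq_indicator (a b : ℝ) :
    betaPDF a b = (Ioo 0 1).indicator
      fun x => ENNReal.ofReal (1 / beta a b * x ^ (a - 1) * (1 - x) ^ (b - 1)) := by
  ext x
  by_cases hx : x ∈ Ioo (0 : ℝ) 1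
  · rw [indicator_of_mem hx, betaPDF_of_pos_lt_one hx.1 hx.2]
  · rw [indicator_of_notMem hx, betaPDF_eq, if_neg (show ¬(0 < x ∧ x < 1) from hx),
      ENNReal.ofReal_zero]

theorem bijOn_div_one_sub : BijOn (fun x : ℝ => x / (1 - x)) (Ioo 0 1) (Ioi 0) := by
  refine InvOn.bijOn (f' := fun u => u / (1 + u)) ⟨fun x hx => ?_, fun u hu => ?_⟩
    (fun x hx => ?_) (fun u hu => ?_)
  · have : 1 - x ≠ 0 := (sub_pos.2 hx.2).ne'
    field_simp; ring
  · have : (0 : ℝ) < u := hu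
    field_simp; ring
  · exact div_pos hx.1 (sub_pos.2 hx.2)
  · have : (0 : ℝ) < u := hu
    exact ⟨by positivity, (div_lt_one (by positivity)).2 (by linarith)⟩

theorem hasDerivAt_div_one_sub {x : ℝ} (hx : x ≠ 1) :
    HasDerivAt (fun x : ℝ => x / (1 - x)) (1 / (1 - x) ^ 2) x := by
  have h : 1 - x ≠ 0 := sub_ne_zero.2 (Ne.symm hx)
  refine ((hasDerivAt_id' x).div ((hasDerivAt_const x 1).sub (hasDerivAt_id' x)) h).congr_deriv ?_
  simp only [Pi.sub_apply]
  field_simp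
  ring

theorem deriv_div_one_sub_mul_betaPrime_density {a b x : ℝ} (hx₀ : 0 < x) (hx₁ : x < 1) :
    1 / (1 - x) ^ 2 * ((x / (1 - x)) ^ (a - 1) * (1 + x / (1 - x)) ^ (-(a + b))) =
      x ^ (a - 1) * (1 - x) ^ (b - 1) := by
  have h : 0 < 1 - x := sub_pos.2 hx₁
  rw [show 1 + x / (1 - x) = 1 / (1 - x) by field_simp; ring]
  apply Real.log_injOn_pos (mem_Ioi.2 (by positivity)) (mem_Ioi.2 (by positivity))
  simp (disch := positivity) only [log_mul, log_div, log_rpow, log_pow, log_one]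
  push_cast; ring

theorem betaPrimeMeasure_eq_withDensity_indicator (a b : ℝ) :
    betaPrimeMeasure a b = volume.withDensity
      ((Ioi 0).indicator
        fun u => ENNReal.ofReal (u ^ (a - 1) * (1 + u) ^ (-(a + b)) / beta a b)) := by
  rw [betaPrimeMeasure, withDensity_ofReal_indicator]
  rfl

theorem map_betaMeasure_div_one_sub (a b : ℝ) :
    (betaMeasure a b).map (fun x => x / (1 - x)) = betaPrimeMeasure a b := by
  rw [betaMeasure, betaPDF_eq_indicator, betaPrimeMeasure_eq_withDensity_indicator]
  refine Measure.map_withDensity_indicator_of_bijOn measurableSet_Ioo (by fun_prop)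
    (T' := fun x => (1 : ℝ →L[ℝ] ℝ).smulRight (1 / (1 - x) ^ 2))
    (fun x hx => (hasDerivAt_div_one_sub hx.2.ne).hasFDerivAt.hasFDerivWithinAt)
    bijOn_div_one_sub fun x hx => ?_
  have h : 0 < 1 - x := sub_pos.2 hx.2
  rw [ContinuousLinearMap.smulRight_one_eq_toSpanSingleton,
    ContinuousLinearMap.det_toSpanSingleton, abs_of_pos (by positivity),
    ← ENNReal.ofReal_mul (by positivity), mul_div_assoc',
    deriv_div_one_sub_mul_betaPrime_density hx.1 hx.2]
  congr 1
  ring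

theorem isProbabilityMeasure_betaPrimeMeasure {a b : ℝ} (ha : 0 < a) (hb : 0 < b) :
    IsProbabilityMeasure (betaPrimeMeasure a b) := by
  have := isProbabilityMeasureBeta ha hb
  rw [← map_betaMeasure_div_one_sub]
  exact Measure.isProbabilityMeasure_map (by fun_prop)

noncomputable def dirichletToBetaPrime (x : ℝ × ℝ) : ℝ × ℝ := ((1 + x.2) / x.1, 1 / x.2)

noncomputable def fderivDirichletToBetaPrime (x : ℝ × ℝ) : ℝ × ℝ →L[ℝ] ℝ × ℝ :=
  (Matrix.toLin (.finTwoProd ℝ) (.finTwoProd ℝ)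
    !![-((1 + x.2) / x.1 ^ 2), x.1⁻¹; 0, -(x.2 ^ 2)⁻¹]).toContinuousLinearMap

@[fun_prop]
theorem measurable_dirichletToBetaPrime : Measurable dirichletToBetaPrime := by
  unfold dirichletToBetaPrime; fun_prop

theorem hasFDerivAt_dirichletToBetaPrime {x : ℝ × ℝ} (hx₁ : x.1 ≠ 0) (hx₂ : x.2 ≠ 0) :
    HasFDerivAt dirichletToBetaPrime (fderivDirichletToBetaPrime x) x := by
  unfold fderivDirichletToBetaPrime dirichletToBetaPrime
  rw [Matrix.toLin_finTwoProd_toContinuousLinearMap]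
  simp only [div_eq_mul_inv, one_mul]
  have h₁ : HasFDerivAt (fun y : ℝ × ℝ => (1 + y.2) * y.1⁻¹)
      ((1 + x.2) • (-(x.1 ^ 2)⁻¹ • ContinuousLinearMap.fst ℝ ℝ ℝ) +
        x.1⁻¹ • ContinuousLinearMap.snd ℝ ℝ ℝ) x :=
    (hasFDerivAt_snd.const_add 1).mul ((hasDerivAt_inv hx₁).comp_hasFDerivAt x hasFDerivAt_fst)
  have h₂ : HasFDerivAt (fun y : ℝ × ℝ => y.2⁻¹)
      (-(x.2 ^ 2)⁻¹ • ContinuousLinearMap.snd ℝ ℝ ℝ) x :=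
    (hasDerivAt_inv hx₂).comp_hasFDerivAt x hasFDerivAt_snd
  refine (h₁.prodMk h₂).congr_fderiv ?_
  ext <;> simp

theorem det_fderivDirichletToBetaPrime (x : ℝ × ℝ) :
    (fderivDirichletToBetaPrime x).det = (1 + x.2) / (x.1 ^ 2 * x.2 ^ 2) := by
  simp only [fderivDirichletToBetaPrime, LinearMap.det_toContinuousLinearMap, LinearMap.det_toLin,
    Matrix.det_fin_two_of]
  field_simp
  ring

theorem bijOn_dirichletToBetaPrime :
    BijOn dirichletToBetaPrime (Ioi 0 ×ˢ Ioi 0) (Ioi 0 ×ˢ Ioi 0) := by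
  refine InvOn.bijOn (f' := fun u => ((1 + 1 / u.2) / u.1, 1 / u.2))
    ⟨fun x ⟨hx₁, hx₂⟩ => ?_, fun u ⟨hu₁, hu₂⟩ => ?_⟩ (fun x ⟨hx₁, hx₂⟩ => ?_)
    (fun u ⟨hu₁, hu₂⟩ => ?_)
  all_goals simp only [mem_Ioi] at *
  · simp only [dirichletToBetaPrime]; ext <;> field_simp
  · simp only [dirichletToBetaPrime]; ext <;> field_simp
  · simp only [dirichletToBetaPrime, mem_prod, mem_Ioi]; constructor <;> positivity
  · simp only [mem_prod, mem_Ioi]; constructor <;> positivity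

theorem det_mul_betaPrime_densities {α₁ α₂ α₃ β₁ β₂ p q : ℝ} (hp : 0 < p) (hq : 0 < q) :
    (1 + q) / (p ^ 2 * q ^ 2) *
      (((1 + q) / p) ^ (α₂ + α₃ + β₁ + β₂ - 1) * (1 + (1 + q) / p) ^ (-(α₂ + α₃ + β₁ + β₂ + α₁)) *
        ((1 / q) ^ (α₃ + β₂ - 1) * (1 + 1 / q) ^ (-(α₃ + β₂ + α₂)))) =
      p ^ (α₁ - 1) * q ^ (α₂ - 1) * (1 + q) ^ β₁ * (1 + p + q) ^ (-(α₁ + α₂ + α₃ + β₁ + β₂)) := by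
  rw [show 1 + (1 + q) / p = (1 + p + q) / p by field_simp; ring,
    show 1 + 1 / q = (1 + q) / q by field_simp; ring]
  apply Real.log_injOn_pos (mem_Ioi.2 (by positivity)) (mem_Ioi.2 (by positivity))
  simp (disch := positivity) only [log_mul, log_div, log_rpow, log_pow, log_one]
  push_cast; ring

theorem map_dirichletToBetaPrime_withDensity {α₁ α₂ α₃ β₁ β₂ : ℝ} (c : ℝ) (h₁ : 0 < α₁)
    (h₂ : 0 < α₂) (h₃ : 0 < α₂ + α₃ + β₁ + β₂) (h₄ : 0 < α₃ + β₂) :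
    (volume.withDensity fun x => ENNReal.ofReal ((Ioi (0 : ℝ) ×ˢ Ioi (0 : ℝ)).indicator
      (fun x => c * x.1 ^ (α₁ - 1) * x.2 ^ (α₂ - 1) * (1 + x.2) ^ β₁ *
        (1 + x.1 + x.2) ^ (-(α₁ + α₂ + α₃ + β₁ + β₂))) x)).map dirichletToBetaPrime =
      ENNReal.ofReal (c * beta (α₂ + α₃ + β₁ + β₂) α₁ * beta (α₃ + β₂) α₂) •
        (betaPrimeMeasure (α₂ + α₃ + β₁ + β₂) α₁).prod (betaPrimeMeasure (α₃ + β₂) α₂) := by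
  rw [betaPrimeMeasure_eq_withDensity_indicator, betaPrimeMeasure_eq_withDensity_indicator,
    Measure.prod_withDensity_indicator measurableSet_Ioi measurableSet_Ioi (by fun_prop)
      (by fun_prop), ← Measure.volume_eq_prod, ← withDensity_smul' _ _ ENNReal.ofReal_ne_top,
    Pi.smul_def, ← indicator_const_smul, withDensity_ofReal_indicator]
  refine Measure.map_withDensity_indicator_of_bijOn (measurableSet_Ioi.prod measurableSet_Ioi)
    measurable_dirichletToBetaPrime
    (fun x hx => (hasFDerivAt_dirichletToBetaPrime hx.1.ne' hx.2.ne').hasFDerivWithinAt)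
    bijOn_dirichletToBetaPrime fun x hx => ?_
  obtain ⟨hp, hq⟩ : 0 < x.1 ∧ 0 < x.2 := hx
  have := beta_pos h₃ h₁
  have := beta_pos h₄ h₂
  simp only [dirichletToBetaPrime, det_fderivDirichletToBetaPrime, smul_eq_mul]
  rw [← ENNReal.ofReal_mul (by positivity), ← ENNReal.ofReal_mul' (by positivity),
    ← ENNReal.ofReal_mul (abs_nonneg _), abs_of_pos (by positivity)]
  congr 1
  have normalize (g₁ g₂ : ℝ) : c * beta (α₂ + α₃ + β₁ + β₂) α₁ * beta (α₃ + β₂) α₂ *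
      (g₁ / beta (α₂ + α₃ + β₁ + β₂) α₁ * (g₂ / beta (α₃ + β₂) α₂)) = c * (g₁ * g₂) := by
    field_simp
  rw [normalize]
  linear_combination c * det_mul_betaPrime_densities (α₁ := α₁) (α₃ := α₃) (β₂ := β₂) hp hq

theorem type2_dirichlet_to_betaPrime_indep_general {α₁ α₂ α₃ β₁ β₂ c : ℝ}
    (h₁ : 0 < α₁) (h₂ : 0 < α₂) (h₃ : 0 < α₂ + α₃ + β₁ + β₂) (h₄ : 0 < α₃ + β₂)
    (μ : Measure (ℝ × ℝ))
    (hμ : μ = volume.withDensity fun x => ENNReal.ofReal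
      ((Ioi (0 : ℝ) ×ˢ Ioi (0 : ℝ)).indicator
        (fun x => c * x.1 ^ (α₁ - 1) * x.2 ^ (α₂ - 1) * (1 + x.2) ^ β₁ *
          (1 + x.1 + x.2) ^ (-(α₁ + α₂ + α₃ + β₁ + β₂))) x))
    (hprob : IsProbabilityMeasure μ) :
    Measure.map (fun x : ℝ × ℝ => ((1 + x.2) / x.1, 1 / x.2)) μ =
      (betaPrimeMeasure (α₂ + α₃ + β₁ + β₂) α₁).prod (betaPrimeMeasure (α₃ + β₂) α₂) := by
  change μ.map dirichletToBetaPrime = _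
  have := Measure.isProbabilityMeasure_map (μ := μ) measurable_dirichletToBetaPrime.aemeasurable
  have := isProbabilityMeasure_betaPrimeMeasure h₃ h₁
  have := isProbabilityMeasure_betaPrimeMeasure h₄ h₂
  subst hμ
  exact Measure.eq_of_eq_smul (map_dirichletToBetaPrime_withDensity c h₁ h₂ h₃ h₄)

/-- Scalar case (p = 1, k = 2) of Theorem 2.4: if `(X₁, X₂)` has joint density
proportional to `x₁^{α₁−1} x₂^{α₂−1} (1+x₂)^{β₁} (1+x₁+x₂)^{−(α₁+α₂+α₃+β₁+β₂)}` on
`(0,∞)²`, then `U₁ = (1+X₂)/X₁` and `U₂ = 1/X₂` are independent type-2 beta random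
variables with parameters `(α₂+α₃+β₁+β₂, α₁)` and `(α₃+β₂, α₂)` respectively. -/
theorem type2_dirichlet_to_betaPrime_indep {α₁ α₂ α₃ β₁ β₂ c : ℝ}
    (h₁ : 0 < α₁) (h₂ : 0 < α₂) (h₃ : 0 < α₂ + α₃ + β₁ + β₂) (h₄ : 0 < α₃ + β₂)
    (hc : 0 < c) (μ : Measure (ℝ × ℝ))
    (hμ : μ = volume.withDensity fun x => ENNReal.ofReal
      ((Ioi (0 : ℝ) ×ˢ Ioi (0 : ℝ)).indicator
        (fun x => c * x.1 ^ (α₁ - 1) * x.2 ^ (α₂ - 1) * (1 + x.2) ^ β₁ *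
          (1 + x.1 + x.2) ^ (-(α₁ + α₂ + α₃ + β₁ + β₂))) x))
    (hprob : IsProbabilityMeasure μ) :
    Measure.map (fun x : ℝ × ℝ => ((1 + x.2) / x.1, 1 / x.2)) μ =
      (betaPrimeMeasure (α₂ + α₃ + β₁ + β₂) α₁).prod (betaPrimeMeasure (α₃ + β₂) α₂) :=
  type2_dirichlet_to_betaPrime_indep_general h₁ h₂ h₃ h₄ μ hμ hprob
end

section
/- (Scalar case p = 1 of Theorem 2.3, k = 2.) Let (X₁, X₂) have joint density on (0,∞)² proportional to x₁^{α₁−1} x₂^{α₂−1} (1+x₂)^{β₁} (1+x₁+x₂)^{−(α₁+α₂+α₃+β₁+β₂)}. Then Z₁ = (1+X₂)/(1+X₁+X₂) and Z₂ = 1/(1+X₂) are independent, with Z₁ ~ Beta(α₂+α₃+β₁+β₂, α₁) and Z₂ ~ Beta(α₃+β₂, α₂). -/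
/-!
The map `(x₁, x₂) ↦ ((1 + x₂) / (1 + x₁ + x₂), 1 / (1 + x₂))` is a diffeomorphism of `(0, ∞)²`
onto `(0, 1)²`, with inverse `(z₁, z₂) ↦ ((1 - z₁) / (z₁ z₂), 1 / z₂ - 1)` and Jacobian determinant
`1 / ((1 + x₁ + x₂)² (1 + x₂))`. Since `1 - z₁ = x₁ / (1 + x₁ + x₂)` and `1 - z₂ = x₂ / (1 + x₂)`,
the density of `(X₁, X₂)` divided by this Jacobian is a constant multiple of
`z₁^(a-1) (1 - z₁)^(α₁-1) · z₂^(b-1) (1 - z₂)^(α₂-1)` with `a = α₂ + α₃ + β₁ + β₂`, `b = α₃ + β₂`.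
So the law of `(Z₁, Z₂)` is a multiple of the product of the two Beta laws, and the multiple is `1`
because both are probability measures.
-/

open MeasureTheory Real Set

/-- The Beta(a,b) distribution on (0,1). -/
noncomputable def betaMeasure (a b : ℝ) : Measure ℝ :=
  volume.withDensity fun y => ENNReal.ofReal
    ((Ioo (0 : ℝ) 1).indicator
      (fun y => y ^ (a - 1) * (1 - y) ^ (b - 1) / (Gamma a * Gamma b / Gamma (a + b))) y)

theorem betaMeasure_eq_probabilityTheory_betaMeasure (a b : ℝ) :
    betaMeasure a b = ProbabilityTheory.betaMeasure a b := by
  rw [betaMeasure, ProbabilityTheory.betaMeasure]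
  congr 1
  funext y
  by_cases hy : y ∈ Ioo (0 : ℝ) 1
  · rw [indicator_of_mem hy, ProbabilityTheory.betaPDF_of_pos_lt_one hy.1 hy.2,
      ProbabilityTheory.beta]
    congr 1
    ring
  · rw [indicator_of_notMem hy, ProbabilityTheory.betaPDF, ProbabilityTheory.betaPDFReal,
      if_neg (show ¬(0 < y ∧ y < 1) from hy)]

theorem isProbabilityMeasure_betaMeasure {a b : ℝ} (ha : 0 < a) (hb : 0 < b) :
    IsProbabilityMeasure (betaMeasure a b) := by
  rw [betaMeasure_eq_probabilityTheory_betaMeasure]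
  exact ProbabilityTheory.isProbabilityMeasureBeta ha hb

theorem eq_of_eq_smul_of_isProbabilityMeasure {α : Type*} [MeasurableSpace α] {ρ ν : Measure α}
    [IsProbabilityMeasure ρ] [IsProbabilityMeasure ν] {K : ENNReal} (h : ρ = K • ν) : ρ = ν := by
  have hK : K = 1 := by simpa using (congrArg (· univ) h).symm
  rw [h, hK, one_smul]

section ChangeOfVariables

variable {E : Type*} [NormedAddCommGroup E] [NormedSpace ℝ E] [FiniteDimensional ℝ E]
  [MeasurableSpace E] [BorelSpace E] (μ : Measure E) [μ.IsAddHaarMeasure]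
  {f : E → E} {f' : E → E →L[ℝ] E} {s : Set E}

theorem map_restrict_withDensity_abs_det_fderiv_mul (hf : Measurable f) (hs : MeasurableSet s)
    (hf' : ∀ x ∈ s, HasFDerivWithinAt f (f' x) s x) (hinj : InjOn f s) (g : E → ENNReal) :
    Measure.map f ((μ.restrict s).withDensity fun x => ENNReal.ofReal |(f' x).det| * g (f x)) =
      (μ.restrict (f '' s)).withDensity g := by
  ext t ht
  have hst : MeasurableSet (f ⁻¹' t ∩ s) := (hf ht).inter hs
  rw [Measure.map_apply hf ht, withDensity_apply _ (hf ht), Measure.restrict_restrict (hf ht),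
    withDensity_apply _ ht, Measure.restrict_restrict ht, ← image_preimage_inter,
    lintegral_image_eq_lintegral_abs_det_fderiv_mul μ hst
      (fun x hx => (hf' x hx.2).mono inter_subset_right) (hinj.mono inter_subset_right)]

end ChangeOfVariables

noncomputable def betaCoords (x : ℝ × ℝ) : ℝ × ℝ :=
  ((1 + x.2) / (1 + x.1 + x.2), 1 / (1 + x.2))

noncomputable def betaCoordsInv (z : ℝ × ℝ) : ℝ × ℝ :=
  ((1 - z.1) / (z.1 * z.2), 1 / z.2 - 1)

theorem mapsTo_betaCoords :
    MapsTo betaCoords (Ioi 0 ×ˢ Ioi 0) (Ioo 0 1 ×ˢ Ioo 0 1) := by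
  rintro ⟨x₁, x₂⟩ ⟨hx₁ : 0 < x₁, hx₂ : 0 < x₂⟩
  simp only [betaCoords, mem_prod, mem_Ioo]
  refine ⟨⟨by positivity, ?_⟩, by positivity, ?_⟩ <;> rw [div_lt_one (by positivity)] <;> linarith

theorem mapsTo_betaCoordsInv :
    MapsTo betaCoordsInv (Ioo 0 1 ×ˢ Ioo 0 1) (Ioi 0 ×ˢ Ioi 0) := by
  rintro ⟨z₁, z₂⟩ ⟨⟨hz₁, hz₁'⟩, hz₂, hz₂'⟩
  have : 0 < 1 - z₁ := by linarith
  simp only [betaCoordsInv, mem_prod, mem_Ioi, sub_pos]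
  exact ⟨by positivity, (one_lt_div hz₂).2 hz₂'⟩

theorem invOn_betaCoordsInv :
    InvOn betaCoordsInv betaCoords (Ioi 0 ×ˢ Ioi 0) (Ioo 0 1 ×ˢ Ioo 0 1) := by
  constructor
  · rintro ⟨x₁, x₂⟩ ⟨hx₁ : 0 < x₁, hx₂ : 0 < x₂⟩
    simp only [betaCoords, betaCoordsInv, Prod.mk.injEq]
    constructor <;> field_simp <;> ring
  · rintro ⟨z₁, z₂⟩ ⟨⟨hz₁, -⟩, hz₂, -⟩
    simp only [betaCoords, betaCoordsInv, Prod.mk.injEq]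
    constructor <;> field_simp <;> ring

theorem bijOn_betaCoords :
    BijOn betaCoords (Ioi 0 ×ˢ Ioi 0) (Ioo 0 1 ×ˢ Ioo 0 1) :=
  invOn_betaCoordsInv.bijOn mapsTo_betaCoords mapsTo_betaCoordsInv

noncomputable def fderivBetaCoords (x : ℝ × ℝ) : ℝ × ℝ →L[ℝ] ℝ × ℝ :=
  (Matrix.toLin (.finTwoProd ℝ) (.finTwoProd ℝ)
    !![-(1 + x.2) / (1 + x.1 + x.2) ^ 2, x.1 / (1 + x.1 + x.2) ^ 2;
      0, -1 / (1 + x.2) ^ 2]).toContinuousLinearMap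

theorem hasFDerivAt_betaCoords {x : ℝ × ℝ} (hu : 1 + x.1 + x.2 ≠ 0) (hv : 1 + x.2 ≠ 0) :
    HasFDerivAt betaCoords (fderivBetaCoords x) x := by
  have hnum : HasFDerivAt (fun x : ℝ × ℝ => 1 + x.2) (ContinuousLinearMap.snd ℝ ℝ ℝ) x :=
    hasFDerivAt_snd.const_add 1
  have hden : HasFDerivAt (fun x : ℝ × ℝ => 1 + x.1 + x.2)
      (ContinuousLinearMap.fst ℝ ℝ ℝ + ContinuousLinearMap.snd ℝ ℝ ℝ) x :=
    (hasFDerivAt_fst.const_add 1).add hasFDerivAt_snd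
  have hfun : betaCoords = fun x => ((1 + x.2) * (1 + x.1 + x.2)⁻¹, (1 + x.2)⁻¹) := by
    funext x
    simp only [betaCoords, div_eq_mul_inv, one_mul]
  rw [hfun, fderivBetaCoords, Matrix.toLin_finTwoProd_toContinuousLinearMap]
  refine ((hnum.mul ((hasDerivAt_inv hu).comp_hasFDerivAt x hden)).prodMk
    ((hasDerivAt_inv hv).comp_hasFDerivAt x hnum)).congr_fderiv ?_
  refine ContinuousLinearMap.ext fun w => Prod.ext ?_ ?_ <;>
    simp only [ContinuousLinearMap.prod_apply, add_apply, smul_apply, neg_apply,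
      ContinuousLinearMap.coe_fst', ContinuousLinearMap.coe_snd', Function.comp_apply, smul_add,
      smul_neg, neg_smul, smul_eq_mul, zero_smul, zero_add] <;>
    field_simp
  ring

theorem det_fderivBetaCoords (x : ℝ × ℝ) :
    (fderivBetaCoords x).det = (1 + x.2) / (1 + x.1 + x.2) ^ 2 * (1 / (1 + x.2) ^ 2) := by
  simp only [fderivBetaCoords, LinearMap.det_toContinuousLinearMap, LinearMap.det_toLin,
    Matrix.det_fin_two_of]
  ring

theorem measurable_betaCoords : Measurable betaCoords := by
  unfold betaCoords
  fun_prop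

theorem type2Dirichlet_kernel_eq_mul_beta_kernels {α₁ α₂ α₃ β₁ β₂ x₁ x₂ : ℝ}
    (hx₁ : 0 < x₁) (hx₂ : 0 < x₂) :
    x₁ ^ (α₁ - 1) * x₂ ^ (α₂ - 1) * (1 + x₂) ^ β₁ * (1 + x₁ + x₂) ^ (-(α₁ + α₂ + α₃ + β₁ + β₂)) =
      1 / ((1 + x₁ + x₂) ^ 2 * (1 + x₂)) *
        (((1 + x₂) / (1 + x₁ + x₂)) ^ (α₂ + α₃ + β₁ + β₂ - 1) * (x₁ / (1 + x₁ + x₂)) ^ (α₁ - 1)) *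
        ((1 / (1 + x₂)) ^ (α₃ + β₂ - 1) * (x₂ / (1 + x₂)) ^ (α₂ - 1)) := by
  set u := 1 + x₁ + x₂
  set v := 1 + x₂
  have hu : 0 < u := by positivity
  have hv : 0 < v := by positivity
  have hv_pow : v ^ β₁ = v ^ (α₂ + α₃ + β₁ + β₂ - 1) / (v ^ (α₃ + β₂ - 1) * v ^ (α₂ - 1) * v) := by
    rw [eq_div_iff (by positivity), ← rpow_add hv, ← rpow_add_one hv.ne', ← rpow_add hv]
    congr 1
    ring
  have hu_pow : u ^ (-(α₁ + α₂ + α₃ + β₁ + β₂)) =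
      (u ^ (α₂ + α₃ + β₁ + β₂ - 1) * u ^ (α₁ - 1) * u ^ 2)⁻¹ := by
    rw [← rpow_add hu, ← rpow_natCast, ← rpow_add hu, ← rpow_neg hu.le]
    congr 1
    push_cast
    ring
  rw [hv_pow, hu_pow, div_rpow hv.le hu.le, div_rpow hx₁.le hu.le, div_rpow zero_le_one hv.le,
    div_rpow hx₂.le hv.le, one_rpow]
  field_simp

section BetaDensities

open ProbabilityTheory

theorem betaPDF_eq_zero_of_notMem {a b y : ℝ} (hy : y ∉ Ioo 0 1) : betaPDF a b y = 0 := by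
  rw [betaPDF, betaPDFReal, if_neg (show ¬(0 < y ∧ y < 1) from hy), ENNReal.ofReal_zero]

theorem betaMeasure_prod_betaMeasure (a b a' b' : ℝ) :
    (_root_.betaMeasure a b).prod (_root_.betaMeasure a' b') =
      (volume.restrict (Ioo 0 1 ×ˢ Ioo 0 1)).withDensity
        fun z => betaPDF a b z.1 * betaPDF a' b' z.2 := by
  have hsupp : (Ioo 0 1 ×ˢ Ioo 0 1).indicator
      (fun z : ℝ × ℝ => betaPDF a b z.1 * betaPDF a' b' z.2) =
        fun z => betaPDF a b z.1 * betaPDF a' b' z.2 := by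
    refine indicator_eq_self.2 fun z hz => ⟨?_, ?_⟩ <;> by_contra hz' <;>
      simp [betaPDF_eq_zero_of_notMem hz'] at hz
  rw [betaMeasure_eq_probabilityTheory_betaMeasure, betaMeasure_eq_probabilityTheory_betaMeasure,
    ProbabilityTheory.betaMeasure, ProbabilityTheory.betaMeasure,
    prod_withDensity (f := betaPDF a b) (g := betaPDF a' b')
      (measurable_betaPDFReal a b).ennreal_ofReal (measurable_betaPDFReal a' b').ennreal_ofReal,
    ← Measure.volume_eq_prod,
    ← withDensity_indicator (measurableSet_Ioo.prod measurableSet_Ioo), hsupp]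

theorem ofReal_type2Dirichlet_density_eq {α₁ α₂ α₃ β₁ β₂ : ℝ} (h₁ : 0 < α₁) (h₂ : 0 < α₂)
    (h₃ : 0 < α₂ + α₃ + β₁ + β₂) (h₄ : 0 < α₃ + β₂) (c : ℝ) {x : ℝ × ℝ}
    (hx : x ∈ Ioi 0 ×ˢ Ioi 0) :
    ENNReal.ofReal (c * x.1 ^ (α₁ - 1) * x.2 ^ (α₂ - 1) * (1 + x.2) ^ β₁ *
        (1 + x.1 + x.2) ^ (-(α₁ + α₂ + α₃ + β₁ + β₂))) =
      ENNReal.ofReal |(fderivBetaCoords x).det| *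
        (ENNReal.ofReal (c * beta (α₂ + α₃ + β₁ + β₂) α₁ * beta (α₃ + β₂) α₂) *
          (betaPDF (α₂ + α₃ + β₁ + β₂) α₁ (betaCoords x).1 *
            betaPDF (α₃ + β₂) α₂ (betaCoords x).2)) := by
  obtain ⟨⟨hz₁, hz₁'⟩, hz₂, hz₂'⟩ := mapsTo_betaCoords hx
  obtain ⟨x₁, x₂⟩ := x
  obtain ⟨hx₁ : 0 < x₁, hx₂ : 0 < x₂⟩ := hx
  have hB₁ := beta_pos h₃ h₁
  have hB₂ := beta_pos h₄ h₂
  simp only [betaCoords] at hz₁ hz₁' hz₂ hz₂' ⊢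
  rw [betaPDF_of_pos_lt_one hz₁ hz₁', betaPDF_of_pos_lt_one hz₂ hz₂',
    ← ENNReal.ofReal_mul (by positivity), ← ENNReal.ofReal_mul' (by positivity),
    ← ENNReal.ofReal_mul (abs_nonneg _)]
  congr 1
  have hdet : |(fderivBetaCoords (x₁, x₂)).det| = 1 / ((1 + x₁ + x₂) ^ 2 * (1 + x₂)) := by
    rw [det_fderivBetaCoords, abs_of_pos (by positivity)]
    field_simp
  have hz₁_compl : 1 - (1 + x₂) / (1 + x₁ + x₂) = x₁ / (1 + x₁ + x₂) := by
    field_simp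
    ring
  have hz₂_compl : 1 - 1 / (1 + x₂) = x₂ / (1 + x₂) := by
    field_simp
    ring
  have hkernel := type2Dirichlet_kernel_eq_mul_beta_kernels (α₁ := α₁) (α₂ := α₂) (α₃ := α₃)
    (β₁ := β₁) (β₂ := β₂) hx₁ hx₂
  simp only [mul_assoc] at hkernel ⊢
  rw [hdet, hz₁_compl, hz₂_compl, hkernel]
  field_simp

theorem map_betaCoords_type2Dirichlet {α₁ α₂ α₃ β₁ β₂ : ℝ} (h₁ : 0 < α₁) (h₂ : 0 < α₂)
    (h₃ : 0 < α₂ + α₃ + β₁ + β₂) (h₄ : 0 < α₃ + β₂) (c : ℝ) :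
    Measure.map betaCoords (volume.withDensity fun x => ENNReal.ofReal
      ((Ioi (0 : ℝ) ×ˢ Ioi (0 : ℝ)).indicator
        (fun x => c * x.1 ^ (α₁ - 1) * x.2 ^ (α₂ - 1) * (1 + x.2) ^ β₁ *
          (1 + x.1 + x.2) ^ (-(α₁ + α₂ + α₃ + β₁ + β₂))) x)) =
      ENNReal.ofReal (c * beta (α₂ + α₃ + β₁ + β₂) α₁ * beta (α₃ + β₂) α₂) •
        (_root_.betaMeasure (α₂ + α₃ + β₁ + β₂) α₁).prod (_root_.betaMeasure (α₃ + β₂) α₂) := by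
  have hS : MeasurableSet (Ioi (0 : ℝ) ×ˢ Ioi (0 : ℝ)) := measurableSet_Ioi.prod measurableSet_Ioi
  set K := ENNReal.ofReal (c * beta (α₂ + α₃ + β₁ + β₂) α₁ * beta (α₃ + β₂) α₂)
  set g : ℝ × ℝ → ENNReal := fun z =>
    betaPDF (α₂ + α₃ + β₁ + β₂) α₁ z.1 * betaPDF (α₃ + β₂) α₂ z.2 with hg_def
  have hg : Measurable g := by
    rw [hg_def]
    unfold betaPDF
    fun_prop
  have hderiv : ∀ x ∈ Ioi (0 : ℝ) ×ˢ Ioi (0 : ℝ),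
      HasFDerivWithinAt betaCoords (fderivBetaCoords x) (Ioi 0 ×ˢ Ioi 0) x := by
    rintro x ⟨hx₁ : 0 < x.1, hx₂ : 0 < x.2⟩
    exact (hasFDerivAt_betaCoords (by positivity) (by positivity)).hasFDerivWithinAt
  have hdensity := ae_restrict_of_forall_mem (μ := volume) hS fun x hx =>
    ofReal_type2Dirichlet_density_eq h₁ h₂ h₃ h₄ c hx
  change Measure.map betaCoords (volume.withDensity (ENNReal.ofReal ∘ _)) = _
  rw [← indicator_comp_of_zero ENNReal.ofReal_zero, withDensity_indicator hS]
  simp only [Function.comp_def]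
  rw [withDensity_congr_ae hdensity,
    map_restrict_withDensity_abs_det_fderiv_mul volume measurable_betaCoords hS hderiv
      bijOn_betaCoords.injOn (fun z => K * g z),
    bijOn_betaCoords.image_eq, betaMeasure_prod_betaMeasure, ← withDensity_smul _ hg]
  rfl

end BetaDensities

theorem type2_dirichlet_to_beta_indep'_general {α₁ α₂ α₃ β₁ β₂ c : ℝ}
    (h₁ : 0 < α₁) (h₂ : 0 < α₂) (h₃ : 0 < α₂ + α₃ + β₁ + β₂) (h₄ : 0 < α₃ + β₂)
    (μ : Measure (ℝ × ℝ))
    (hμ : μ = volume.withDensity fun x => ENNReal.ofReal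
      ((Ioi (0 : ℝ) ×ˢ Ioi (0 : ℝ)).indicator
        (fun x => c * x.1 ^ (α₁ - 1) * x.2 ^ (α₂ - 1) * (1 + x.2) ^ β₁ *
          (1 + x.1 + x.2) ^ (-(α₁ + α₂ + α₃ + β₁ + β₂))) x))
    (hprob : IsProbabilityMeasure μ) :
    Measure.map (fun x : ℝ × ℝ => ((1 + x.2) / (1 + x.1 + x.2), 1 / (1 + x.2))) μ =
      (betaMeasure (α₂ + α₃ + β₁ + β₂) α₁).prod (betaMeasure (α₃ + β₂) α₂) := by
  change Measure.map betaCoords μ = _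
  have : IsProbabilityMeasure (Measure.map betaCoords μ) :=
    Measure.isProbabilityMeasure_map measurable_betaCoords.aemeasurable
  have := isProbabilityMeasure_betaMeasure h₃ h₁
  have := isProbabilityMeasure_betaMeasure h₄ h₂
  exact eq_of_eq_smul_of_isProbabilityMeasure (hμ ▸ map_betaCoords_type2Dirichlet h₁ h₂ h₃ h₄ c)

/-- Scalar case (p = 1, k = 2) of Theorem 2.3: if `(X₁, X₂)` has joint density
proportional to `x₁^{α₁−1} x₂^{α₂−1} (1+x₂)^{β₁} (1+x₁+x₂)^{−(α₁+α₂+α₃+β₁+β₂)}` on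
`(0,∞)²`, then `Z₁ = (1+X₂)/(1+X₁+X₂)` and `Z₂ = 1/(1+X₂)` are independent with
`Z₁ ~ Beta(α₂+α₃+β₁+β₂, α₁)` and `Z₂ ~ Beta(α₃+β₂, α₂)`. -/
theorem type2_dirichlet_to_beta_indep' {α₁ α₂ α₃ β₁ β₂ c : ℝ}
    (h₁ : 0 < α₁) (h₂ : 0 < α₂) (h₃ : 0 < α₂ + α₃ + β₁ + β₂) (h₄ : 0 < α₃ + β₂)
    (hc : 0 < c) (μ : Measure (ℝ × ℝ))
    (hμ : μ = volume.withDensity fun x => ENNReal.ofReal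
      ((Ioi (0 : ℝ) ×ˢ Ioi (0 : ℝ)).indicator
        (fun x => c * x.1 ^ (α₁ - 1) * x.2 ^ (α₂ - 1) * (1 + x.2) ^ β₁ *
          (1 + x.1 + x.2) ^ (-(α₁ + α₂ + α₃ + β₁ + β₂))) x))
    (hprob : IsProbabilityMeasure μ) :
    Measure.map (fun x : ℝ × ℝ => ((1 + x.2) / (1 + x.1 + x.2), 1 / (1 + x.2))) μ =
      (betaMeasure (α₂ + α₃ + β₁ + β₂) α₁).prod (betaMeasure (α₃ + β₂) α₂) :=
  type2_dirichlet_to_beta_indep'_general h₁ h₂ h₃ h₄ μ hμ hprob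
end
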